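/- Let μ be a non-atomic Borel probability measure on [0,1]. Given q ≥ 0 and 0 ≤ a ≤ b, there exist a constant c₁ > 0 and r₀ > 0 such that for all 0 < r ≤ r₀: c₁ · Σ_{B ∈ B_r^*} μ(B̄^b)^q ≤ Σ_{B ∈ B_r^*} μ(B̄^a)^q ≤ Σ_{B ∈ B_r^*} μ(B̄^b)^q. -/

import Mathlib

open MeasureTheory Filter Set
open scoped Classical

noncomputable section

/-- The enlargement `B̄^a` of the interval `[s,t]` by the factor `1+a` about its centre. -/
def enlarge (a s t : ℝ) : Set ℝ :=
  Set.Icc (s - a * (t - s) / 2) (t + a * (t - s) / 2)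

/-- The moment sum `Σ_{B ∈ B_r^*} μ(B̄^a)^q` over grid intervals of length `r`
whose interior meets the support of `μ` (i.e. with `μ(B) > 0`). -/
def gridSum (μ : Measure ℝ) (a q R : ℝ) : ℝ :=
  ∑' m : ℤ, if 0 < μ (Set.Icc ((m : ℝ) * R) (((m : ℝ) + 1) * R))
    then (μ (enlarge a ((m : ℝ) * R) (((m : ℝ) + 1) * R))).toReal ^ q else 0

/-- The coarse multifractal moment function
`β_a(q) = inf{β : limsup_{r→0⁺} r^β Σ_{B ∈ B_r^*} μ(B̄^a)^q = 0}`.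
(For the nonnegative quantity `r^β · Σ…`, vanishing of the `limsup` as `r → 0⁺`
is the same as convergence to `0`.) -/
def betaA (μ : Measure ℝ) (a q : ℝ) : ℝ :=
  sInf {β : ℝ | Filter.Tendsto (fun R => R ^ β * gridSum μ a q R)
    (nhdsWithin 0 (Set.Ioi 0)) (nhds 0)}

/-- `F` is a "fractal subset" of `[0,1]`: compact, Lebesgue-null, containing `0` and `1`. -/
def IsFractalSubset (F : Set ℝ) : Prop :=
  IsCompact F ∧ F ⊆ Set.Icc 0 1 ∧ (0 : ℝ) ∈ F ∧ (1 : ℝ) ∈ F ∧ MeasureTheory.volume F = 0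

/-- The complementary intervals `I_n = (l n, r n)` of `F` in `[0,1]`, enumerated with
nonincreasing lengths. -/
structure FractalComplement (F : Set ℝ) where
  l : ℕ → ℝ
  r : ℕ → ℝ
  lt : ∀ n, l n < r n
  disj : Pairwise fun n m => Disjoint (Set.Ioo (l n) (r n)) (Set.Ioo (l m) (r m))
  union : (⋃ n, Set.Ioo (l n) (r n)) = Set.Icc (0 : ℝ) 1 \ F
  mono : ∀ n, r (n + 1) - l (n + 1) ≤ r n - l n

/-- The length `|I_n|` of the `n`-th complementary interval. -/
def FractalComplement.len {F : Set ℝ} (c : FractalComplement F) (n : ℕ) : ℝ := c.r n - c.l n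

/-- The enlargement `Ī_n^a` of the closure of the complementary interval `I_n`. -/
def FractalComplement.I {F : Set ℝ} (c : FractalComplement F) (a : ℝ) (n : ℕ) : Set ℝ :=
  enlarge a (c.l n) (c.r n)

/-- The lacunarity condition with constant `lam`: every interval `[x-r, x+r]` with `x ∈ F`
and `0 < r ≤ 1` contains a complementary interval of length at least `lam * r`. -/
def Lacunary {F : Set ℝ} (c : FractalComplement F) (lam : ℝ) : Prop :=
  ∀ x ∈ F, ∀ R : ℝ, 0 < R → R ≤ 1 → ∃ n,
    Set.Ioo (c.l n) (c.r n) ⊆ Set.Icc (x - R) (x + R) ∧ lam * R ≤ c.len n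

/-- The topological support of `μ` is exactly `F`. -/
def HasSupport (μ : Measure ℝ) (F : Set ℝ) : Prop :=
  μ Fᶜ = 0 ∧ ∀ x ∈ F, ∀ ε : ℝ, 0 < ε → 0 < μ (Set.Ioo (x - ε) (x + ε))

/-
Every enlarged interval `B̄^b` of a grid cell `B` is covered by the `2K + 1` cells within `K`
steps of `B`, where `b ≤ 2K`. The heaviest of these cells has positive mass whenever `B` does,
so it contributes to the `a`-sum with a term at least `(μ(B̄^b) / (2K + 1))^q`. Each cell is
charged this way by at most `2K + 1` cells, which gives the lower bound with
`c₁ = (2K + 1)^{-(q+1)}`; the upper bound is termwise, since `B̄^a ⊆ B̄^b`.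
-/

lemma enlarge_subset_enlarge {a b s t : ℝ} (hab : a ≤ b) (hst : s ≤ t) :
    enlarge a s t ⊆ enlarge b s t := by
  apply Set.Icc_subset_Icc <;> nlinarith

lemma Icc_subset_enlarge {a s t : ℝ} (ha : 0 ≤ a) (hst : s ≤ t) :
    Set.Icc s t ⊆ enlarge a s t := by
  apply Set.Icc_subset_Icc <;> nlinarith

def gridCell (R : ℝ) (m : ℤ) : Set ℝ :=
  Set.Icc ((m : ℝ) * R) (((m : ℝ) + 1) * R)

def gridTerm (μ : Measure ℝ) (a q R : ℝ) (m : ℤ) : ℝ :=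
  if 0 < μ (gridCell R m) then (μ (enlarge a ((m : ℝ) * R) (((m : ℝ) + 1) * R))).toReal ^ q
  else 0

lemma gridSum_eq_tsum_gridTerm (μ : Measure ℝ) (a q R : ℝ) :
    gridSum μ a q R = ∑' m, gridTerm μ a q R m := rfl

lemma exists_mem_gridCell {R x : ℝ} (hR : 0 < R) {lo hi : ℤ} (hlohi : lo ≤ hi)
    (hx : x ∈ Set.Icc ((lo : ℝ) * R) (((hi : ℝ) + 1) * R)) :
    ∃ j ∈ Finset.Icc lo hi, x ∈ gridCell R j := by
  have hlo : lo ≤ ⌊x / R⌋ := Int.le_floor.2 ((le_div_iff₀ hR).2 hx.1)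
  refine ⟨min ⌊x / R⌋ hi, Finset.mem_Icc.2 ⟨le_min hlo hlohi, min_le_right _ _⟩, ?_, ?_⟩
  · calc ((min ⌊x / R⌋ hi : ℤ) : ℝ) * R ≤ (⌊x / R⌋ : ℝ) * R := by
          gcongr; exact min_le_left _ _
      _ ≤ x / R * R := by gcongr; exact Int.floor_le _
      _ = x := div_mul_cancel₀ x hR.ne'
  · rcases le_total ⌊x / R⌋ hi with h | h
    · rw [min_eq_left h]
      exact ((div_lt_iff₀ hR).1 (Int.lt_floor_add_one _)).le
    · rw [min_eq_right h]
      exact hx.2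

lemma enlarge_subset_biUnion_gridCell {R b : ℝ} (hR : 0 < R) {K : ℕ} (hb : b ≤ 2 * K)
    (m : ℤ) :
    enlarge b ((m : ℝ) * R) (((m : ℝ) + 1) * R) ⊆
      ⋃ k ∈ Finset.Icc (-(K : ℤ)) K, gridCell R (m + k) := by
  intro x hx
  have hbR : b * R ≤ 2 * K * R := by gcongr
  obtain ⟨j, hj, hxj⟩ := exists_mem_gridCell hR (lo := m - K) (hi := m + K) (by omega)
    (x := x) (by push_cast; constructor <;> linarith [hx.1, hx.2])
  refine Set.mem_biUnion (x := j - m) ?_ (by simpa using hxj)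
  simp only [Finset.coe_Icc, Set.mem_Icc, Finset.mem_Icc] at hj ⊢
  omega

lemma mem_Icc_of_mem_gridCell {R x : ℝ} (hR : 0 < R) {m : ℤ} (hx : x ∈ gridCell R m)
    (hx01 : x ∈ Set.Icc (0 : ℝ) 1) : m ∈ Finset.Icc (-1) ⌈1 / R⌉ := by
  have hm : (0 : ℝ) ≤ m + 1 := nonneg_of_mul_nonneg_left (hx01.1.trans hx.2) hR
  have hm' : (m : ℝ) ≤ ⌈1 / R⌉ :=
    ((le_div_iff₀ hR).2 (hx.1.trans hx01.2)).trans (Int.le_ceil _)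
  have hm1 : (-1 : ℝ) ≤ m := by linarith
  exact Finset.mem_Icc.2 ⟨by exact_mod_cast hm1, by exact_mod_cast hm'⟩

lemma card_Icc_neg_self (K : ℕ) : (Finset.Icc (-(K : ℤ)) K).card = 2 * K + 1 := by
  rw [Int.card_Icc]
  omega

lemma exists_measure_enlarge_le (μ : Measure ℝ) {R b : ℝ} (hR : 0 < R) {K : ℕ}
    (hb : b ≤ 2 * K) (m : ℤ) :
    ∃ k ∈ Finset.Icc (-(K : ℤ)) K,
      μ (enlarge b ((m : ℝ) * R) (((m : ℝ) + 1) * R)) ≤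
        (2 * K + 1 : ℕ) * μ (gridCell R (m + k)) ∧
      μ (gridCell R m) ≤ μ (gridCell R (m + k)) := by
  set T := Finset.Icc (-(K : ℤ)) K
  have h0 : (0 : ℤ) ∈ T := by simp [T]
  obtain ⟨k, hkT, hkmax⟩ := T.exists_max_image (fun k => μ (gridCell R (m + k))) ⟨0, h0⟩
  refine ⟨k, hkT, ?_, by simpa using hkmax 0 h0⟩
  calc μ (enlarge b ((m : ℝ) * R) (((m : ℝ) + 1) * R))
      ≤ μ (⋃ k ∈ T, gridCell R (m + k)) :=
        measure_mono (enlarge_subset_biUnion_gridCell hR hb m)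
    _ ≤ ∑ k ∈ T, μ (gridCell R (m + k)) := measure_biUnion_finset_le T _
    _ ≤ T.card • μ (gridCell R (m + k)) := Finset.sum_le_card_nsmul _ _ _ hkmax
    _ = (2 * K + 1 : ℕ) * μ (gridCell R (m + k)) := by rw [card_Icc_neg_self, nsmul_eq_mul]

lemma gridTerm_nonneg (μ : Measure ℝ) (a q R : ℝ) (m : ℤ) : 0 ≤ gridTerm μ a q R m := by
  unfold gridTerm
  split_ifs <;> positivity

section GridTerm

variable (μ : Measure ℝ) {a b q R : ℝ}

lemma gridTerm_mono [IsFiniteMeasure μ] (hR : 0 < R) (hq : 0 ≤ q) (hab : a ≤ b) (m : ℤ) :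
    gridTerm μ a q R m ≤ gridTerm μ b q R m := by
  unfold gridTerm
  split_ifs
  · gcongr
    · exact measure_ne_top μ _
    · exact enlarge_subset_enlarge hab (by nlinarith)
  · rfl

lemma exists_gridTerm_le [IsFiniteMeasure μ] (hR : 0 < R) (hq : 0 ≤ q) (ha : 0 ≤ a) {K : ℕ}
    (hb : b ≤ 2 * K) (m : ℤ) :
    ∃ k ∈ Finset.Icc (-(K : ℤ)) K,
      gridTerm μ b q R m ≤ ((2 * K + 1 : ℕ) : ℝ) ^ q * gridTerm μ a q R (m + k) := by
  by_cases hm : 0 < μ (gridCell R m)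
  swap
  · refine ⟨0, by simp, ?_⟩
    rw [gridTerm, if_neg hm]
    exact mul_nonneg (by positivity) (gridTerm_nonneg μ _ _ _ _)
  obtain ⟨k, hkT, hcover, hmk⟩ := exists_measure_enlarge_le μ hR hb m
  refine ⟨k, hkT, ?_⟩
  have hst : ((m + k : ℤ) : ℝ) * R ≤ (((m + k : ℤ) : ℝ) + 1) * R := by nlinarith
  rw [gridTerm, gridTerm, if_pos hm, if_pos (hm.trans_le hmk),
    ← Real.mul_rpow (by positivity) ENNReal.toReal_nonneg]
  gcongr
  calc (μ (enlarge b ((m : ℝ) * R) (((m : ℝ) + 1) * R))).toReal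
      ≤ ((2 * K + 1 : ℕ) * μ (gridCell R (m + k))).toReal :=
        ENNReal.toReal_mono (by finiteness) hcover
    _ = (2 * K + 1 : ℕ) * (μ (gridCell R (m + k))).toReal := by
        rw [ENNReal.toReal_mul, ENNReal.toReal_natCast]
    _ ≤ (2 * K + 1 : ℕ) * (μ (enlarge a (((m + k : ℤ) : ℝ) * R)
          ((((m + k : ℤ) : ℝ) + 1) * R))).toReal := by
        gcongr
        · exact measure_ne_top μ _
        · exact Icc_subset_enlarge ha hst

lemma summable_gridTerm (hsupp : μ (Set.Icc (0 : ℝ) 1)ᶜ = 0) (hR : 0 < R) :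
    Summable (gridTerm μ a q R) := by
  refine summable_of_ne_finset_zero (s := Finset.Icc (-1) ⌈1 / R⌉) fun m hm => ?_
  have hcell : ¬ 0 < μ (gridCell R m) := fun hpos => by
    obtain ⟨x, hx, hx01⟩ : (gridCell R m ∩ Set.Icc 0 1).Nonempty := by
      by_contra! h
      exact hpos.ne' (measure_mono_null (fun x hx hx01 => h.subset ⟨hx, hx01⟩) hsupp)
    exact hm (mem_Icc_of_mem_gridCell hR hx hx01)
  rw [gridTerm, if_neg hcell]

end GridTerm

lemma tsum_le_mul_card_mul_tsum {f g : ℤ → ℝ} (hf : Summable f) (hf0 : ∀ m, 0 ≤ f m)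
    (hg0 : ∀ m, 0 ≤ g m) {C : ℝ} (hC : 0 ≤ C) (T : Finset ℤ)
    (h : ∀ m, ∃ k ∈ T, g m ≤ C * f (m + k)) :
    ∑' m, g m ≤ C * T.card * ∑' m, f m := by
  have hshift : ∀ k, Summable fun m => f (m + k) := fun k =>
    hf.comp_injective (add_left_injective k)
  have hshift_tsum : ∀ k, ∑' m, f (m + k) = ∑' m, f m := fun k => (Equiv.addRight k).tsum_eq f
  have hsum : Summable fun m => C * ∑ k ∈ T, f (m + k) :=
    (summable_sum fun k _ => hshift k).mul_left C
  have hle : ∀ m, g m ≤ C * ∑ k ∈ T, f (m + k) := fun m => by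
    obtain ⟨k, hk, hgk⟩ := h m
    exact hgk.trans (by gcongr; exact Finset.single_le_sum (fun j _ => hf0 _) hk)
  calc ∑' m, g m ≤ ∑' m, C * ∑ k ∈ T, f (m + k) :=
        (Summable.of_nonneg_of_le hg0 hle hsum).tsum_le_tsum hle hsum
    _ = C * ∑ k ∈ T, ∑' m, f (m + k) := by
        rw [Summable.tsum_mul_left _ (summable_sum fun k _ => hshift k),
          Summable.tsum_finsetSum fun k _ => hshift k]
    _ = C * T.card * ∑' m, f m := by
        rw [Finset.sum_congr rfl fun k _ => hshift_tsum k, Finset.sum_const, nsmul_eq_mul,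
          mul_assoc]

theorem stmt_3_general (μ : Measure ℝ) [IsProbabilityMeasure μ]
    (hsupp : μ (Set.Icc (0 : ℝ) 1)ᶜ = 0)
    (q a b : ℝ) (hq : 0 ≤ q) (ha : 0 ≤ a) (hab : a ≤ b) :
    ∃ c₁ r₀ : ℝ, 0 < c₁ ∧ 0 < r₀ ∧ ∀ R : ℝ, 0 < R → R ≤ r₀ →
      c₁ * gridSum μ b q R ≤ gridSum μ a q R ∧
      gridSum μ a q R ≤ gridSum μ b q R := by
  set K := ⌈b / 2⌉₊
  set N : ℝ := ((2 * K + 1 : ℕ) : ℝ)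
  have hb : b ≤ 2 * K := by linarith [Nat.le_ceil (b / 2)]
  refine ⟨(N ^ q * N)⁻¹, 1, by positivity, one_pos, fun R hR _ => ⟨?_, ?_⟩⟩
  · have hlower := tsum_le_mul_card_mul_tsum (summable_gridTerm μ hsupp hR)
      (gridTerm_nonneg μ a q R) (gridTerm_nonneg μ b q R) (by positivity) _
      (exists_gridTerm_le μ hR hq ha hb)
    rw [card_Icc_neg_self] at hlower
    rw [gridSum_eq_tsum_gridTerm, gridSum_eq_tsum_gridTerm, inv_mul_le_iff₀ (by positivity)]
    exact hlower
  · exact (summable_gridTerm μ hsupp hR).tsum_le_tsum (gridTerm_mono μ hR hq hab)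
      (summable_gridTerm μ hsupp hR)

/-- for `q ≥ 0` and `0 ≤ a ≤ b` the enlarged grid moment sums for
parameters `a` and `b` are comparable. -/
theorem stmt_3 (μ : Measure ℝ) [IsProbabilityMeasure μ] [NullSingletonClass μ]
    (hsupp : μ (Set.Icc (0 : ℝ) 1)ᶜ = 0)
    (q a b : ℝ) (hq : 0 ≤ q) (ha : 0 ≤ a) (hab : a ≤ b) :
    ∃ c₁ r₀ : ℝ, 0 < c₁ ∧ 0 < r₀ ∧ ∀ R : ℝ, 0 < R → R ≤ r₀ →
      c₁ * gridSum μ b q R ≤ gridSum μ a q R ∧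
      gridSum μ a q R ≤ gridSum μ b q R :=
  stmt_3_general μ hsupp q a b hq ha hab
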